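/- Let E : [0,∞) → ℝ be nonnegative and differentiable with E'(t) ≤ -λ E(t) + C E(t)^{3/2} for constants λ, C > 0. If E(0) < (λ/(2C))², then E(t) ≤ E(0) e^{-λ t / 2} for all t ≥ 0. -/

import Mathlib

/-!
Compare `E` with the barrier `D e^{-μt}` for `E 0 < D < ((λ - μ)/C)²`. At a first contact point
`E = D e^{-μt} ≤ D`, so `C √E < λ - μ`, and the energy inequality forces `E'` strictly below the
barrier's slope `-μ D e^{-μt}`; hence `E` never crosses the barrier. Letting `D ↓ E 0` with
`μ = λ/2` gives the decay estimate.
-/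

open Real Set Filter Topology

theorem mul_rpow_three_halves_lt {c κ x : ℝ} (hc : 0 < c) (hκ : 0 ≤ κ) (hx : 0 < x)
    (hxκ : x < (κ / c) ^ 2) : c * x ^ (3 / 2 : ℝ) < κ * x := by
  have hsqrt : √x < κ / c := by
    simpa [sqrt_sq (div_nonneg hκ hc.le)] using sqrt_lt_sqrt hx.le hxκ
  have hrpow : x ^ (3 / 2 : ℝ) = √x * x := by
    rw [show (3 / 2 : ℝ) = 1 / 2 + 1 by norm_num, rpow_add hx, rpow_one, ← sqrt_eq_rpow]
  calc c * x ^ (3 / 2 : ℝ) = c * √x * x := by rw [hrpow, mul_assoc]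
    _ < κ * x := by
      gcongr
      exact (lt_div_iff₀' hc).mp hsqrt

theorem le_mul_exp_of_deriv_le_sub_add_rpow {E : ℝ → ℝ} {lam C μ D : ℝ} (hC : 0 < C)
    (hμ : 0 ≤ μ) (hμlam : μ ≤ lam) (hdiff : ∀ t ≥ (0 : ℝ), DifferentiableAt ℝ E t)
    (hineq : ∀ t ≥ (0 : ℝ), deriv E t ≤ -lam * E t + C * E t ^ (3 / 2 : ℝ))
    (hD : 0 < D) (hDsmall : D < ((lam - μ) / C) ^ 2) (hE0 : E 0 ≤ D) :
    ∀ t ≥ (0 : ℝ), E t ≤ D * exp (-μ * t) := by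
  intro t ht
  have hbarrier : ∀ s, HasDerivAt (fun s => D * exp (-μ * s)) (-μ * (D * exp (-μ * s))) s :=
    fun s => (((hasDerivAt_id' s).const_mul (-μ)).exp.const_mul D).congr_deriv (by ring)
  refine image_le_of_deriv_right_lt_deriv_boundary
    (fun s hs => (hdiff s hs.1).continuousAt.continuousWithinAt)
    (fun s hs => (hdiff s hs.1).hasDerivAt.hasDerivWithinAt)
    (by simpa using hE0) hbarrier ?_ ⟨ht, le_rfl⟩
  intro s hs hcontact
  have hpos : 0 < E s := hcontact ▸ by positivity
  have hsmall : E s < ((lam - μ) / C) ^ 2 := by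
    refine lt_of_le_of_lt ?_ hDsmall
    rw [hcontact]
    exact mul_le_of_le_one_right hD.le (exp_le_one_iff.mpr (by nlinarith [hs.1]))
  have hcubic := mul_rpow_three_halves_lt hC (sub_nonneg.mpr hμlam) hpos hsmall
  rw [← hcontact]
  linarith [hineq s hs.1]

theorem bootstrap_small_data_decay (E : ℝ → ℝ) (lam C : ℝ) (hlam : 0 < lam) (hC : 0 < C)
    (hdiff : ∀ t ≥ (0:ℝ), DifferentiableAt ℝ E t)
    (hnonneg : ∀ t ≥ (0:ℝ), 0 ≤ E t)
    (hineq : ∀ t ≥ (0:ℝ), deriv E t ≤ -lam * E t + C * (E t) ^ ((3:ℝ)/2))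
    (hsmall : E 0 < (lam / (2 * C)) ^ 2) :
    ∀ t ≥ (0:ℝ), E t ≤ E 0 * Real.exp (-lam * t / 2) := by
  intro t ht
  have hbarrier : ∀ D ∈ Ioo (E 0) ((lam / (2 * C)) ^ 2), E t ≤ D * exp (-lam * t / 2) := by
    intro D ⟨hD0, hDsmall⟩
    have hrate : (lam - lam / 2) / C = lam / (2 * C) := by field_simp; ring
    have := le_mul_exp_of_deriv_le_sub_add_rpow hC (by positivity) (by linarith) hdiff hineq
      ((hnonneg 0 le_rfl).trans_lt hD0) (hrate ▸ hDsmall) hD0.le t ht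
    rwa [show -(lam / 2) * t = -lam * t / 2 by ring] at this
  have hlim : Tendsto (fun D => D * exp (-lam * t / 2)) (𝓝[>] (E 0))
      (𝓝 (E 0 * exp (-lam * t / 2))) :=
    ((continuous_mul_const _).tendsto _).mono_left nhdsWithin_le_nhds
  exact ge_of_tendsto hlim (eventually_of_mem (Ioo_mem_nhdsGT hsmall) hbarrier)
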